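/- arXiv:1512.07522 — 3 statements merged into one kernel-verified Lean document; each statement's English description precedes it below -/
import Mathlib

section
/- Let n ≥ 1 and j, i ∈ V. If 𝒟 has a path of length n (i.e., consisting of n edges) from j to i, then the ji-th entry of A_1 ⊙ A_0^{⊙(n−1)} equals the maximum of the weights d_{ji}(p) over all paths p of length n from j to i; otherwise this entry equals 0. -/
/-!
The `ki`-entry of the max-times power `A^{⊙m}` is the largest product of entries of `A` along a
walk with `m` edges from `k` to `i`, and it is attained whenever it is nonzero. For
`A = A₀`, a walk has nonzero product only if it is a path of `𝒟`, in which case the product is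
its edge weight. Finally `A₁ = diag(c_ii) ⊙ A₀`, so by associativity
`A₁ ⊙ A₀^{⊙(n-1)} = diag(c_ii) ⊙ A₀^{⊙n}`, and the factor `c_jj` turns edge weights into
path weights.
-/

open scoped NNReal ENNReal Classical

namespace MaxLinearDAG

variable {d : ℕ}

/-- `p` is a directed path (with at least one edge) from `j` to `i` in the edge relation `E`. -/
def PathFrom (E : Fin d → Fin d → Prop) (j i : Fin d) (p : List (Fin d)) : Prop :=
  2 ≤ p.length ∧ p.head? = some j ∧ p.getLast? = some i ∧ List.Chain' E p

/-- The directed graph given by `E` is acyclic: no directed path from a node to itself. -/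
def Acyclic (E : Fin d → Fin d → Prop) : Prop :=
  ∀ i, ¬ ∃ p, PathFrom E i i p

/-- `j` is an ancestor of `i`: there is a path from `j` to `i`. -/
def anc (E : Fin d → Fin d → Prop) (j i : Fin d) : Prop :=
  ∃ p, PathFrom E j i p

/-- The weight of a path `p` starting at `j`: `c j j` times the product of the
edge weights along `p`. -/
noncomputable def pathWeight (c : Fin d → Fin d → ℝ≥0) (j : Fin d) (p : List (Fin d)) : ℝ≥0 :=
  c j j * ((p.zip p.tail).map fun q => c q.1 q.2).prod

/-- `b` is the max-linear coefficient matrix of the recursive ML model on `(E, c)`: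
for `j ∈ an(i)`, `b j i` is the (attained) maximum of the path weights over all paths
from `j` to `i`; `b i i = c i i`; and `b j i = 0` for `j ∉ An(i)`. -/
def IsMLMatrix (E : Fin d → Fin d → Prop) (c b : Fin d → Fin d → ℝ≥0) : Prop :=
  (∀ i, b i i = c i i) ∧
  (∀ j i, j ≠ i → ¬ anc E j i → b j i = 0) ∧
  (∀ j i p, PathFrom E j i p → pathWeight c j p ≤ b j i) ∧
  (∀ j i, anc E j i → ∃ p, PathFrom E j i p ∧ pathWeight c j p = b j i)

/-- `x` is the vector of recursive max-linear values on `(E, c)` for noise `z`: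
`x i = max (max_{k ∈ pa(i)} c k i * x k) (c i i * z i)`, empty max being `0`. -/
def IsRecML (E : Fin d → Fin d → Prop) (c : Fin d → Fin d → ℝ≥0) (z x : Fin d → ℝ≥0) : Prop :=
  ∀ i, x i = (Finset.univ.sup fun k => if E k i then c k i * x k else 0) ⊔ c i i * z i

/-- Max-times matrix product `F ⊙ G`. -/
noncomputable def mprod (F G : Fin d → Fin d → ℝ≥0) : Fin d → Fin d → ℝ≥0 :=
  fun i j => Finset.univ.sup fun k => F i k * G k j

/-- Max-times matrix power, `mpow A 0` being the identity matrix. -/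
noncomputable def mpow (A : Fin d → Fin d → ℝ≥0) : ℕ → Fin d → Fin d → ℝ≥0
  | 0 => fun i j => if i = j then 1 else 0
  | n + 1 => mprod (mpow A n) A

/-- `p` is a max-weighted path from `j` to `i`. -/
def MaxWeighted (E : Fin d → Fin d → Prop) (c b : Fin d → Fin d → ℝ≥0)
    (j i : Fin d) (p : List (Fin d)) : Prop :=
  PathFrom E j i p ∧ pathWeight c j p = b j i

/-- The lowest max-weighted ancestors of `i` in `U`: nodes `j ∈ An(i) ∩ U` such that no
max-weighted path from `j` to `i` passes through a node of `U \ {j}`. -/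
def AnLow (E : Fin d → Fin d → Prop) (c b : Fin d → Fin d → ℝ≥0)
    (U : Set (Fin d)) (i : Fin d) : Set (Fin d) :=
  {j | (anc E j i ∨ j = i) ∧ j ∈ U ∧
    ∀ p, MaxWeighted E c b j i p → ¬ ∃ u ∈ U \ {j}, u ∈ p}

/-- The highest max-weighted descendants of `i` in `U`: nodes `l ∈ De(i) ∩ U` such that no
max-weighted path from `i` to `l` passes through a node of `U \ {l}`. -/
def DeHigh (E : Fin d → Fin d → Prop) (c b : Fin d → Fin d → ℝ≥0)
    (U : Set (Fin d)) (i : Fin d) : Set (Fin d) :=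
  {l | (anc E i l ∨ l = i) ∧ l ∈ U ∧
    ∀ p, MaxWeighted E c b i l p → ¬ ∃ u ∈ U \ {l}, u ∈ p}

noncomputable def edgeProd (A : Fin d → Fin d → ℝ≥0) (p : List (Fin d)) : ℝ≥0 :=
  ((p.zip p.tail).map fun q => A q.1 q.2).prod

@[simp]
lemma edgeProd_singleton (A : Fin d → Fin d → ℝ≥0) (a : Fin d) : edgeProd A [a] = 1 := by
  simp [edgeProd]

@[simp]
lemma edgeProd_cons_cons (A : Fin d → Fin d → ℝ≥0) (a b : Fin d) (r : List (Fin d)) :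
    edgeProd A (a :: b :: r) = A a b * edgeProd A (b :: r) := by
  simp [edgeProd]

lemma pathWeight_eq_mul_edgeProd (c : Fin d → Fin d → ℝ≥0) (j : Fin d) (p : List (Fin d)) :
    pathWeight c j p = c j j * edgeProd c p :=
  rfl

noncomputable def weightMatrix (E : Fin d → Fin d → Prop) (c : Fin d → Fin d → ℝ≥0) :
    Fin d → Fin d → ℝ≥0 :=
  fun a b => if E a b then c a b else 0

lemma edgeProd_weightMatrix (E : Fin d → Fin d → Prop) (c : Fin d → Fin d → ℝ≥0) :
    ∀ p : List (Fin d), edgeProd (weightMatrix E c) p =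
      if p.IsChain E then edgeProd c p else 0
  | [] => by simp [edgeProd]
  | [a] => by simp
  | a :: b :: r => by
    simp only [edgeProd_cons_cons, edgeProd_weightMatrix E c (b :: r), List.isChain_cons_cons]
    by_cases hab : E a b <;> by_cases hr : (b :: r).IsChain E <;> simp [weightMatrix, hab, hr]

lemma mprod_assoc (F G H : Fin d → Fin d → ℝ≥0) :
    mprod (mprod F G) H = mprod F (mprod G H) := by
  funext i j
  simp only [mprod, NNReal.finset_sup_mul, NNReal.mul_finset_sup, mul_assoc]
  exact Finset.sup_comm _ _ _

lemma mpow_zero_mprod (A : Fin d → Fin d → ℝ≥0) : mprod (mpow A 0) A = A := by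
  funext i j
  refine le_antisymm (Finset.sup_le fun k _ => ?_) (Finset.le_sup_of_le (Finset.mem_univ i) ?_)
  · by_cases h : i = k <;> simp [mpow, h]
  · simp [mpow]

lemma mprod_mpow_zero (A : Fin d → Fin d → ℝ≥0) : mprod A (mpow A 0) = A := by
  funext i j
  refine le_antisymm (Finset.sup_le fun k _ => ?_) (Finset.le_sup_of_le (Finset.mem_univ j) ?_)
  · by_cases h : k = j <;> simp [mpow, h]
  · simp [mpow]

lemma mpow_succ' (A : Fin d → Fin d → ℝ≥0) (m : ℕ) : mpow A (m + 1) = mprod A (mpow A m) := by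
  induction m with
  | zero => exact (mpow_zero_mprod A).trans (mprod_mpow_zero A).symm
  | succ m ih =>
    change mprod (mpow A (m + 1)) A = _
    rw [ih, mprod_assoc, ← mpow, ih]

lemma mprod_mul_left_apply (s : Fin d → ℝ≥0) (F G : Fin d → Fin d → ℝ≥0) (i j : Fin d) :
    mprod (fun a b => s a * F a b) G i j = s i * mprod F G i j := by
  simp only [mprod, NNReal.mul_finset_sup, mul_assoc]

lemma edgeProd_le_mpow (A : Fin d → Fin d → ℝ≥0) :
    ∀ (m : ℕ) {k i : Fin d} (t : List (Fin d)), t.length = m → (k :: t).getLast? = some i →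
      edgeProd A (k :: t) ≤ mpow A m k i
  | 0, k, i, [], _, hlast => by
    obtain rfl : k = i := by simpa using hlast
    simp [mpow]
  | m + 1, k, i, b :: r, hlen, hlast => by
    rw [edgeProd_cons_cons, mpow_succ']
    calc A k b * edgeProd A (b :: r) ≤ A k b * mpow A m b i := by
          gcongr
          exact edgeProd_le_mpow A m r (by simpa using hlen)
            (by rwa [List.getLast?_cons_cons] at hlast)
      _ ≤ mprod A (mpow A m) k i :=
          Finset.le_sup (f := fun l => A k l * mpow A m l i) (Finset.mem_univ b)

lemma exists_edgeProd_eq_mpow (A : Fin d → Fin d → ℝ≥0) :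
    ∀ (m : ℕ) {k i : Fin d}, mpow A m k i ≠ 0 →
      ∃ t : List (Fin d), t.length = m ∧ (k :: t).getLast? = some i ∧
        edgeProd A (k :: t) = mpow A m k i
  | 0, k, i, h => by
    obtain rfl : k = i := by by_contra hki; simp [mpow, hki] at h
    exact ⟨[], rfl, rfl, by simp [mpow]⟩
  | m + 1, k, i, h => by
    obtain ⟨l, -, hl⟩ := Finset.exists_mem_eq_sup Finset.univ ⟨k, Finset.mem_univ k⟩
      fun l => A k l * mpow A m l i
    change mprod A (mpow A m) k i = A k l * mpow A m l i at hl
    rw [mpow_succ', hl] at h ⊢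
    obtain ⟨t, hlen, hlast, hprod⟩ := exists_edgeProd_eq_mpow A m (right_ne_zero_of_mul h)
    exact ⟨l :: t, by simp [hlen], by rwa [List.getLast?_cons_cons],
      by rw [edgeProd_cons_cons, hprod]⟩

section Paths

variable {E : Fin d → Fin d → Prop} {c : Fin d → Fin d → ℝ≥0} {n : ℕ} {k i : Fin d}

lemma edgeProd_le_mpow_weightMatrix {p : List (Fin d)} (hp : PathFrom E k i p)
    (hlen : p.length = n + 1) : edgeProd c p ≤ mpow (weightMatrix E c) n k i := by
  obtain ⟨-, hhead, hlast, hchain⟩ := hp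
  obtain ⟨t, rfl⟩ := List.head?_eq_some_iff.mp hhead
  calc edgeProd c (k :: t) = edgeProd (weightMatrix E c) (k :: t) := by
        rw [edgeProd_weightMatrix]
        exact (if_pos hchain).symm
    _ ≤ mpow (weightMatrix E c) n k i := edgeProd_le_mpow _ n t (by simpa using hlen) hlast

lemma exists_pathFrom_edgeProd_eq_mpow_weightMatrix (hn : 1 ≤ n)
    (h : mpow (weightMatrix E c) n k i ≠ 0) :
    ∃ p, PathFrom E k i p ∧ p.length = n + 1 ∧ edgeProd c p = mpow (weightMatrix E c) n k i := by
  obtain ⟨t, hlen, hlast, hprod⟩ := exists_edgeProd_eq_mpow _ n h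
  rw [edgeProd_weightMatrix] at hprod
  have hchain : (k :: t).IsChain E := by
    by_contra hc
    rw [if_neg hc] at hprod
    exact h hprod.symm
  rw [if_pos hchain] at hprod
  exact ⟨k :: t, ⟨by simp only [List.length_cons]; omega, rfl, hlast, hchain⟩, by simp [hlen], hprod⟩

end Paths

theorem stmt2_general {d : ℕ} (E : Fin d → Fin d → Prop)
    (c : Fin d → Fin d → ℝ≥0)
    (n : ℕ) (hn : 1 ≤ n) (j i : Fin d) :
    let A0 : Fin d → Fin d → ℝ≥0 := fun a a' => if E a a' then c a a' else 0
    let A1 : Fin d → Fin d → ℝ≥0 := fun a a' => if E a a' then c a a * c a a' else 0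
    ((∃ p, PathFrom E j i p ∧ p.length = n + 1) →
      (∀ p, PathFrom E j i p → p.length = n + 1 →
          pathWeight c j p ≤ mprod A1 (mpow A0 (n - 1)) j i) ∧
        ∃ p, PathFrom E j i p ∧ p.length = n + 1 ∧
          pathWeight c j p = mprod A1 (mpow A0 (n - 1)) j i) ∧
    ((¬ ∃ p, PathFrom E j i p ∧ p.length = n + 1) →
      mprod A1 (mpow A0 (n - 1)) j i = 0) := by
  intro A0 A1
  have hentry : mprod A1 (mpow A0 (n - 1)) j i = c j j * mpow (weightMatrix E c) n j i := by
    obtain ⟨m, rfl⟩ := Nat.exists_eq_add_of_le' hn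
    have hA1 : A1 = fun a b => c a a * weightMatrix E c a b := by
      funext a b
      simp only [A1, weightMatrix, mul_ite, mul_zero]
    rw [Nat.add_sub_cancel, mpow_succ', ← mprod_mul_left_apply, hA1]
    rfl
  simp only [hentry, pathWeight_eq_mul_edgeProd]
  refine ⟨fun ⟨p₀, hp₀, hlen₀⟩ => ⟨fun p hp hlen => ?_, ?_⟩, fun hno => ?_⟩
  · gcongr
    exact edgeProd_le_mpow_weightMatrix hp hlen
  · by_cases hW : mpow (weightMatrix E c) n j i = 0
    · have hp₀_le : edgeProd c p₀ ≤ 0 := hW ▸ edgeProd_le_mpow_weightMatrix hp₀ hlen₀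
      exact ⟨p₀, hp₀, hlen₀, by rw [hW, nonpos_iff_eq_zero.mp hp₀_le]⟩
    · obtain ⟨p, hp, hlen, hw⟩ := exists_pathFrom_edgeProd_eq_mpow_weightMatrix hn hW
      exact ⟨p, hp, hlen, by rw [hw]⟩
  · by_contra hne
    obtain ⟨p, hp, hlen, -⟩ :=
      exists_pathFrom_edgeProd_eq_mpow_weightMatrix hn (right_ne_zero_of_mul hne)
    exact hno ⟨p, hp, hlen⟩

/-- Let `n ≥ 1`. If `𝒟` has a path of length `n` (i.e. with `n` edges, hence
`n + 1` vertices) from `j` to `i`, then the `ji`-th entry of `A1 ⊙ A0^{⊙(n-1)}` equals the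
(attained) maximum of the weights over all paths of length `n` from `j` to `i`; otherwise
this entry equals `0`. -/
theorem stmt2 {d : ℕ} (hd : 1 ≤ d) (E : Fin d → Fin d → Prop) (hE : Acyclic E)
    (c : Fin d → Fin d → ℝ≥0) (hcd : ∀ i, 0 < c i i) (hce : ∀ k i, E k i → 0 < c k i)
    (n : ℕ) (hn : 1 ≤ n) (j i : Fin d) :
    let A0 : Fin d → Fin d → ℝ≥0 := fun a a' => if E a a' then c a a' else 0
    let A1 : Fin d → Fin d → ℝ≥0 := fun a a' => if E a a' then c a a * c a a' else 0
    ((∃ p, PathFrom E j i p ∧ p.length = n + 1) →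
      (∀ p, PathFrom E j i p → p.length = n + 1 →
          pathWeight c j p ≤ mprod A1 (mpow A0 (n - 1)) j i) ∧
        ∃ p, PathFrom E j i p ∧ p.length = n + 1 ∧
          pathWeight c j p = mprod A1 (mpow A0 (n - 1)) j i) ∧
    ((¬ ∃ p, PathFrom E j i p ∧ p.length = n + 1) →
      mprod A1 (mpow A0 (n - 1)) j i = 0) :=
  stmt2_general E c n hn j i
end MaxLinearDAG
end

section
/- For all i ∈ V, k ∈ An(i), and j ∈ An(k), one has b_{ji} ≥ b_{jk} b_{ki} / b_{kk} > 0. Moreover, the inequality b_{ji} ≥ b_{jk} b_{ki} / b_{kk} holds for all i, j, k ∈ V. -/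
open scoped NNReal ENNReal Classical

namespace List

variable {α M : Type*}

theorem IsChain.rel_of_mem_zip_tail {R : α → α → Prop} :
    ∀ {l : List α}, l.IsChain R → ∀ q ∈ l.zip l.tail, R q.1 q.2
  | [], _, _, hq | [_], _, _, hq => by simp at hq
  | a :: b :: l, h, q, hq => by
    rw [isChain_cons_cons] at h
    rcases mem_cons.mp hq with rfl | hq
    · exact h.1
    · exact h.2.rel_of_mem_zip_tail q hq

theorem prod_map_zip_tail_append_cons [CommMonoid M] (f : α × α → M) (k : α) (t : List α) :
    ∀ l : List α, (((l ++ k :: t).zip (l ++ k :: t).tail).map f).prod =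
      (((l ++ [k]).zip (l ++ [k]).tail).map f).prod * (((k :: t).zip t).map f).prod
  | [] => by simp
  | [a] => by simp
  | a :: b :: l => by
    have ih := prod_map_zip_tail_append_cons f k t (b :: l)
    simp only [cons_append, tail_cons, zip_cons_cons, map_cons, prod_cons] at ih ⊢
    rw [ih, mul_assoc]

end List

namespace MaxLinearDAG

variable {d : ℕ} {E : Fin d → Fin d → Prop} {c b : Fin d → Fin d → ℝ≥0} {i j k : Fin d}

theorem PathFrom.append {p q : List (Fin d)} (hp : PathFrom E j k p) (hq : PathFrom E k i q) :
    PathFrom E j i (p ++ q.tail) := by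
  obtain ⟨hpl, hph, hplast, hpc⟩ := hp
  obtain ⟨hql, hqh, hqlast, hqc⟩ := hq
  obtain ⟨t, rfl⟩ := List.head?_eq_some_iff.mp hqh
  have ht : t ≠ [] := by rintro rfl; simp at hql
  replace hqc : (∀ y ∈ t.head?, E k y) ∧ t.IsChain E := List.isChain_cons.mp hqc
  refine ⟨?_, ?_, ?_, hpc.append hqc.2 ?_⟩
  · simp only [List.length_append, List.tail_cons]
    have := List.length_pos_iff.mpr ht
    omega
  · rw [List.head?_append, hph]
    rfl
  · rwa [List.tail_cons, List.getLast?_append_of_ne_nil _ ht, ← List.getLast?_cons_of_ne_nil ht]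
  · intro x hx y hy
    rw [hplast, Option.mem_some_iff] at hx
    exact hx ▸ hqc.1 y hy

theorem pathWeight_append (c : Fin d → Fin d → ℝ≥0) {p q : List (Fin d)}
    (hp : p.getLast? = some k) (hq : q.head? = some k) :
    pathWeight c j (p ++ q.tail) * c k k = pathWeight c j p * pathWeight c k q := by
  obtain ⟨p, rfl⟩ := List.getLast?_eq_some_iff.mp hp
  obtain ⟨t, rfl⟩ := List.head?_eq_some_iff.mp hq
  rw [List.tail_cons, List.append_assoc, List.singleton_append, pathWeight, pathWeight,
    pathWeight, List.prod_map_zip_tail_append_cons, List.tail_cons]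
  ring

theorem pathWeight_pos (hcd : ∀ i, 0 < c i i) (hce : ∀ k i, E k i → 0 < c k i)
    {p : List (Fin d)} (hp : PathFrom E j i p) : 0 < pathWeight c j p := by
  refine mul_pos (hcd j) (List.prod_pos fun x hx => ?_)
  obtain ⟨q, hq, rfl⟩ := List.mem_map.mp hx
  exact hce q.1 q.2 (hp.2.2.2.rel_of_mem_zip_tail q hq)

namespace IsMLMatrix

theorem diag_pos (hcd : ∀ i, 0 < c i i) (hb : IsMLMatrix E c b) (k : Fin d) : 0 < b k k :=
  hb.1 k ▸ hcd k

theorem pos_of_anc_or_eq (hcd : ∀ i, 0 < c i i) (hce : ∀ k i, E k i → 0 < c k i)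
    (hb : IsMLMatrix E c b) (h : anc E j k ∨ j = k) : 0 < b j k := by
  rcases h with h | rfl
  · obtain ⟨p, hp, hw⟩ := hb.2.2.2 j k h
    exact hw ▸ pathWeight_pos hcd hce hp
  · exact hb.diag_pos hcd j

theorem mul_le_mul_diag (hb : IsMLMatrix E c b) (i j k : Fin d) :
    b j k * b k i ≤ b j i * b k k := by
  rcases eq_or_ne j k with rfl | hjk
  · rw [mul_comm]
  rcases eq_or_ne k i with rfl | hki
  · rfl
  by_cases hjk' : anc E j k
  swap
  · simp [hb.2.1 j k hjk hjk']
  by_cases hki' : anc E k i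
  swap
  · simp [hb.2.1 k i hki hki']
  obtain ⟨p, hp, hwp⟩ := hb.2.2.2 j k hjk'
  obtain ⟨q, hq, hwq⟩ := hb.2.2.2 k i hki'
  calc b j k * b k i = pathWeight c j (p ++ q.tail) * c k k := by
        rw [← hwp, ← hwq, pathWeight_append c hp.2.2.1 hq.2.1]
    _ ≤ b j i * b k k := hb.1 k ▸ mul_le_mul_left (hb.2.2.1 j i _ (hp.append hq)) _

end IsMLMatrix

theorem stmt4_general {d : ℕ} (E : Fin d → Fin d → Prop)
    (c : Fin d → Fin d → ℝ≥0) (hcd : ∀ i, 0 < c i i) (hce : ∀ k i, E k i → 0 < c k i)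
    (b : Fin d → Fin d → ℝ≥0) (hb : IsMLMatrix E c b) :
    (∀ i k j, (anc E k i ∨ k = i) → (anc E j k ∨ j = k) →
      0 < b j k * b k i / b k k ∧ b j k * b k i / b k k ≤ b j i) ∧
    (∀ i j k, b j k * b k i / b k k ≤ b j i) := by
  have hle (i j k : Fin d) : b j k * b k i / b k k ≤ b j i :=
    (div_le_iff₀ (hb.diag_pos hcd k)).mpr (hb.mul_le_mul_diag i j k)
  refine ⟨fun i k j hki hjk => ⟨?_, hle i j k⟩, hle⟩
  exact div_pos (mul_pos (hb.pos_of_anc_or_eq hcd hce hjk) (hb.pos_of_anc_or_eq hcd hce hki))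
    (hb.diag_pos hcd k)

/-- For all `i ∈ V`, `k ∈ An(i)` and `j ∈ An(k)` one has
`b j i ≥ b j k * b k i / b k k > 0`; moreover `b j i ≥ b j k * b k i / b k k` holds for all
`i, j, k ∈ V`. -/
theorem stmt4 {d : ℕ} (hd : 1 ≤ d) (E : Fin d → Fin d → Prop) (hE : Acyclic E)
    (c : Fin d → Fin d → ℝ≥0) (hcd : ∀ i, 0 < c i i) (hce : ∀ k i, E k i → 0 < c k i)
    (b : Fin d → Fin d → ℝ≥0) (hb : IsMLMatrix E c b) :
    (∀ i k j, (anc E k i ∨ k = i) → (anc E j k ∨ j = k) →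
      0 < b j k * b k i / b k k ∧ b j k * b k i / b k k ≤ b j i) ∧
    (∀ i j k, b j k * b k i / b k k ≤ b j i) :=
  stmt4_general E c hcd hce b hb
end MaxLinearDAG
end

section
/- Let 𝒟 = (V,E) be a DAG with reachability matrix R and let B = (b_{ij})_{d×d} be a nonnegative matrix with sgn(B) = R (in particular b_{ii} > 0 for all i). Set A = diag(b_{11},…,b_{dd}) and A_0 = ((b_{ij}/b_{ii})·1_{pa(j)}(i))_{d×d}. Then the following are equivalent: (i) there exist positive weights c_{ki} > 0 for (k,i) ∈ E and c_{ii} > 0 for i ∈ V such that for every z ∈ [0,∞)^d and every i ∈ V, max_{j∈V} b_{ji} z_j = max( max_{k ∈ pa(i)} c_{ki} · max_{j∈V} b_{jk} z_j , c_{ii} z_i ); (ii) the fixed point equation B = A ∨ (B ⊙ A_0) holds (∨ is entrywise maximum). In that case (i) holds with the weights c_{ki} = b_{ki}/b_{kk} and c_{ii} = b_{ii}. -/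
/-!
Write `z ⊙ F` for the max-times product of a row vector with a matrix. The recursive equations
for `x = z ⊙ B` with weights `c` hold for every `z` iff `B = diag(c) ∨ (B ⊙ C)`, where `C` carries
the edge weights: unit vectors give one direction, associativity of `⊙` the other. For the
canonical weights this matrix equation is the fixed point equation. Conversely, from
`B = diag(c) ∨ (B ⊙ C)` one reads off `c_ii ≤ b_ii` and `c_ki ≤ b_ki / b_kk`, and, by induction
along the DAG, `b_jk b_kl ≤ b_jl b_kk`, i.e. `B ⊙ A_0 ≤ B`; squeezing gives `B = A ∨ (B ⊙ A_0)`.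
-/

open scoped NNReal ENNReal Classical

namespace MaxLinearDAG

variable {d : ℕ}

section Paths

variable {E : Fin d → Fin d → Prop}

lemma pathFrom_pair {k i : Fin d} (h : E k i) : PathFrom E k i [k, i] :=
  ⟨le_rfl, rfl, rfl, List.isChain_pair.2 h⟩

lemma anc_of_edge {k i : Fin d} (h : E k i) : anc E k i := ⟨_, pathFrom_pair h⟩

lemma PathFrom.concat {j k i : Fin d} {p : List (Fin d)} (hp : PathFrom E j k p) (h : E k i) :
    PathFrom E j i (p ++ [i]) := by
  obtain ⟨hlen, hhead, hlast, hchain⟩ := hp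
  cases p with
  | nil => simp at hlen
  | cons a t =>
    refine ⟨by simp, by simp_all, List.getLast?_concat, List.IsChain.append hchain (by simp) ?_⟩
    intro x hx y hy
    rw [hlast, Option.mem_some_iff] at hx
    simp only [List.head?_cons, Option.mem_some_iff] at hy
    exact hx ▸ hy ▸ h

lemma anc_of_transGen {j i : Fin d} (h : Relation.TransGen E j i) : anc E j i := by
  induction h with
  | single h => exact anc_of_edge h
  | tail _ h ih => obtain ⟨p, hp⟩ := ih; exact ⟨_, hp.concat h⟩

lemma Acyclic.ne_of_edge (hE : Acyclic E) {k i : Fin d} (h : E k i) : k ≠ i := by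
  rintro rfl
  exact hE k ⟨_, pathFrom_pair h⟩

lemma Acyclic.wellFounded (hE : Acyclic E) : WellFounded E :=
  haveI : Std.Irrefl (Relation.TransGen E) := ⟨fun i h => hE i (anc_of_transGen h)⟩
  Subrelation.wf Relation.TransGen.single (Finite.wellFounded_of_trans_of_irrefl _)

end Paths

section MaxTimes

noncomputable def vecMprod (z : Fin d → ℝ≥0) (F : Fin d → Fin d → ℝ≥0) : Fin d → ℝ≥0 :=
  fun i => Finset.univ.sup fun j => F j i * z j

noncomputable def diagPart (c : Fin d → Fin d → ℝ≥0) : Fin d → Fin d → ℝ≥0 :=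
  fun j i => if j = i then c i i else 0

noncomputable def edgePart (E : Fin d → Fin d → Prop) (c : Fin d → Fin d → ℝ≥0) :
    Fin d → Fin d → ℝ≥0 :=
  fun k i => if E k i then c k i else 0

lemma vecMprod_sup (z : Fin d → ℝ≥0) (F G : Fin d → Fin d → ℝ≥0) :
    vecMprod z (F ⊔ G) = vecMprod z F ⊔ vecMprod z G := by
  funext i
  simp only [vecMprod, Pi.sup_apply, ← max_mul_mul_right]
  exact Finset.sup_sup

lemma vecMprod_mprod (z : Fin d → ℝ≥0) (F G : Fin d → Fin d → ℝ≥0) :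
    vecMprod z (mprod F G) = vecMprod (vecMprod z F) G := by
  funext i
  simp only [vecMprod, mprod, NNReal.finset_sup_mul, NNReal.mul_finset_sup]
  rw [Finset.sup_comm]
  simp only [mul_comm, mul_left_comm]

lemma vecMprod_single (F : Fin d → Fin d → ℝ≥0) (j : Fin d) :
    vecMprod (Pi.single j 1) F = F j := by
  funext i
  simp [vecMprod, Pi.single_apply, mul_ite, Finset.sup_ite, Finset.filter_eq']

lemma vecMprod_diagPart (z : Fin d → ℝ≥0) (c : Fin d → Fin d → ℝ≥0) (i : Fin d) :
    vecMprod z (diagPart c) i = c i i * z i := by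
  simp [vecMprod, diagPart, ite_mul, Finset.sup_ite, Finset.filter_eq']

lemma mprod_mono_right (F : Fin d → Fin d → ℝ≥0) {G G' : Fin d → Fin d → ℝ≥0} (h : G ≤ G') :
    mprod F G ≤ mprod F G' := fun _ i =>
  Finset.sup_mono_fun fun k _ => mul_le_mul_right (h k i) _

lemma isRecML_iff {E : Fin d → Fin d → Prop} {c : Fin d → Fin d → ℝ≥0} {z x : Fin d → ℝ≥0} :
    IsRecML E c z x ↔ x = vecMprod x (edgePart E c) ⊔ vecMprod z (diagPart c) := by
  simp only [IsRecML, funext_iff, Pi.sup_apply, vecMprod_diagPart]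
  simp only [vecMprod, edgePart, ite_mul, zero_mul]

theorem forall_isRecML_iff {E : Fin d → Fin d → Prop} {b c : Fin d → Fin d → ℝ≥0} :
    (∀ z, IsRecML E c z (vecMprod z b)) ↔ b = diagPart c ⊔ mprod b (edgePart E c) := by
  simp only [isRecML_iff, ← vecMprod_mprod, ← vecMprod_sup, sup_comm (diagPart c)]
  constructor
  · intro h
    funext j
    simpa only [vecMprod_single] using h (Pi.single j 1)
  · intro h z
    exact congrArg (vecMprod z) h

end MaxTimes

section FixedPoint

variable {E : Fin d → Fin d → Prop} {b c : Fin d → Fin d → ℝ≥0}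

lemma diagPart_le_self (b : Fin d → Fin d → ℝ≥0) : diagPart b ≤ b := by
  intro j i
  by_cases h : j = i
  · subst h; simp [diagPart]
  · simp [diagPart, h]

lemma le_mprod_edgePart (E : Fin d → Fin d → Prop) (b c : Fin d → Fin d → ℝ≥0)
    {k i : Fin d} (h : E k i) (j : Fin d) : b j k * c k i ≤ mprod b (edgePart E c) j i := by
  simpa [mprod, edgePart, h] using Finset.le_sup (f := fun m => b j m * edgePart E c m i)
    (Finset.mem_univ k)

variable (h : b = diagPart c ⊔ mprod b (edgePart E c))
include h

lemma diagPart_le_of_eq : diagPart c ≤ diagPart b := fun j i => by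
  by_cases hji : j = i
  · subst hji
    simpa [diagPart] using (congrFun₂ h j j).ge.trans' le_sup_left
  · simp [diagPart, hji]

lemma edgePart_le_of_eq (hpos : ∀ k, 0 < b k k) :
    edgePart E c ≤ edgePart E fun k i => b k i / b k k := fun k i => by
  by_cases hki : E k i
  · simp only [edgePart, if_pos hki]
    rw [le_div_iff₀ (hpos k), mul_comm]
    exact (le_mprod_edgePart E b c hki k).trans ((congrFun₂ h k i).ge.trans' le_sup_right)
  · simp [edgePart, hki]

lemma mul_le_mul_diag_of_eq (hwf : WellFounded E) (j k l : Fin d) :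
    b j k * b k l ≤ b j l * b k k := by
  induction l using hwf.induction with
  | _ l ih =>
  by_cases hkl : k = l
  · rw [hkl, mul_comm]
  have hbkl : b k l = mprod b (edgePart E c) k l := by
    simpa [diagPart, hkl] using congrFun₂ h k l
  rw [hbkl, mprod, NNReal.mul_finset_sup]
  refine Finset.sup_le fun m _ => ?_
  by_cases hml : E m l
  · calc b j k * (b k m * edgePart E c m l) = b j k * b k m * c m l := by
          simp [edgePart, hml, mul_assoc]
      _ ≤ b j m * b k k * c m l := mul_le_mul_left (ih m hml) _
      _ = b j m * c m l * b k k := by ring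
      _ ≤ b j l * b k k := mul_le_mul_left
          ((le_mprod_edgePart E b c hml j).trans ((congrFun₂ h j l).ge.trans' le_sup_right)) _
  · simp [edgePart, hml]

end FixedPoint

lemma mprod_edgePart_div_le {E : Fin d → Fin d → Prop} {b : Fin d → Fin d → ℝ≥0}
    (hb : ∀ j k l, b j k * b k l ≤ b j l * b k k) :
    mprod b (edgePart E fun k i => b k i / b k k) ≤ b := fun j i =>
  Finset.sup_le fun k _ => by
    by_cases hki : E k i
    · simp only [edgePart, if_pos hki, ← mul_div_assoc]
      exact div_le_of_le_mul₀ zero_le zero_le (hb j k i)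
    · simp [edgePart, hki]

theorem eq_fixedPoint_of_eq {E : Fin d → Fin d → Prop} {b c : Fin d → Fin d → ℝ≥0}
    (hwf : WellFounded E) (hpos : ∀ k, 0 < b k k) (h : b = diagPart c ⊔ mprod b (edgePart E c)) :
    b = diagPart b ⊔ mprod b (edgePart E fun k i => b k i / b k k) := by
  refine le_antisymm ?_ (sup_le (diagPart_le_self b)
    (mprod_edgePart_div_le (mul_le_mul_diag_of_eq h hwf)))
  calc b = diagPart c ⊔ mprod b (edgePart E c) := h
    _ ≤ _ := sup_le_sup (diagPart_le_of_eq h) (mprod_mono_right b (edgePart_le_of_eq h hpos))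

noncomputable def canonicalWeights (b : Fin d → Fin d → ℝ≥0) : Fin d → Fin d → ℝ≥0 :=
  fun k i => if k = i then b i i else b k i / b k k

lemma diagPart_canonicalWeights (b : Fin d → Fin d → ℝ≥0) :
    diagPart (canonicalWeights b) = diagPart b := by
  funext j i
  simp [diagPart, canonicalWeights]

lemma edgePart_canonicalWeights {E : Fin d → Fin d → Prop} (hE : Acyclic E)
    (b : Fin d → Fin d → ℝ≥0) :
    edgePart E (canonicalWeights b) = edgePart E fun k i => b k i / b k k := by
  funext k i
  by_cases hki : E k i
  · simp [edgePart, canonicalWeights, hki, hE.ne_of_edge hki]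
  · simp [edgePart, hki]

theorem stmt7_general {d : ℕ} (E : Fin d → Fin d → Prop) (hE : Acyclic E)
    (b : Fin d → Fin d → ℝ≥0)
    (hsgn : ∀ j i, 0 < b j i ↔ (anc E j i ∨ j = i)) :
    let A : Fin d → Fin d → ℝ≥0 := fun j i => if j = i then b i i else 0
    let A0 : Fin d → Fin d → ℝ≥0 := fun k i => if E k i then b k i / b k k else 0
    ((∃ c' : Fin d → Fin d → ℝ≥0, (∀ k i, E k i → 0 < c' k i) ∧ (∀ i, 0 < c' i i) ∧
        ∀ z : Fin d → ℝ≥0,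
          IsRecML E c' z fun i => Finset.univ.sup fun j => b j i * z j) ↔
      ∀ j i, b j i = A j i ⊔ mprod b A0 j i) ∧
    ((∀ j i, b j i = A j i ⊔ mprod b A0 j i) →
      ∀ z : Fin d → ℝ≥0,
        IsRecML E (fun k i => if k = i then b i i else b k i / b k k) z
          fun i => Finset.univ.sup fun j => b j i * z j) := by
  intro A A0
  have hpos : ∀ k, 0 < b k k := fun k => (hsgn k k).2 (Or.inr rfl)
  have hfix : (∀ j i, b j i = A j i ⊔ mprod b A0 j i) ↔ b = diagPart b ⊔ mprod b A0 :=
    ⟨fun h => funext₂ h, fun h => congrFun₂ h⟩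
  have hcanon : (∀ z, IsRecML E (canonicalWeights b) z (vecMprod z b)) ↔
      b = diagPart b ⊔ mprod b A0 := by
    rw [forall_isRecML_iff, diagPart_canonicalWeights, edgePart_canonicalWeights hE]
    rfl
  rw [hfix]
  refine ⟨⟨fun ⟨c, _, _, hc⟩ => eq_fixedPoint_of_eq hE.wellFounded hpos
    (forall_isRecML_iff.1 hc), fun h => ⟨canonicalWeights b, fun k i hki => ?_, fun i => ?_,
    hcanon.2 h⟩⟩, hcanon.2⟩
  · simpa [canonicalWeights, hE.ne_of_edge hki] using
      div_pos ((hsgn k i).2 (Or.inl (anc_of_edge hki))) (hpos k)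
  · simpa [canonicalWeights] using hpos i

/-- Let `𝒟` be a DAG with reachability matrix `R = sgn(B)` for a nonnegative
matrix `B`, and set `A = diag(b 1 1, …, b d d)`, `A0 = ((b i j / b i i) • 1_{pa(j)}(i))`.
Then `B` is the ML coefficient matrix of a recursive ML model on `𝒟` (i.e. there are positive
weights `c'` such that `max_j b j i * z j` solves the recursive equations on `𝒟`) iff the
fixed point equation `B = A ∨ (B ⊙ A0)` holds; in that case the weights
`c' k i = b k i / b k k`, `c' i i = b i i` work. -/
theorem stmt7 {d : ℕ} (hd : 1 ≤ d) (E : Fin d → Fin d → Prop) (hE : Acyclic E)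
    (b : Fin d → Fin d → ℝ≥0)
    (hsgn : ∀ j i, 0 < b j i ↔ (anc E j i ∨ j = i)) :
    let A : Fin d → Fin d → ℝ≥0 := fun j i => if j = i then b i i else 0
    let A0 : Fin d → Fin d → ℝ≥0 := fun k i => if E k i then b k i / b k k else 0
    ((∃ c' : Fin d → Fin d → ℝ≥0, (∀ k i, E k i → 0 < c' k i) ∧ (∀ i, 0 < c' i i) ∧
        ∀ z : Fin d → ℝ≥0,
          IsRecML E c' z fun i => Finset.univ.sup fun j => b j i * z j) ↔
      ∀ j i, b j i = A j i ⊔ mprod b A0 j i) ∧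
    ((∀ j i, b j i = A j i ⊔ mprod b A0 j i) →
      ∀ z : Fin d → ℝ≥0,
        IsRecML E (fun k i => if k = i then b i i else b k i / b k k) z
          fun i => Finset.univ.sup fun j => b j i * z j) :=
  stmt7_general E hE b hsgn
end MaxLinearDAG
end
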